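/- arXiv:math/0106070 — 3 statements merged into one kernel-verified Lean document; each statement's English description precedes it below -/
import Mathlib

section
/- Let L be a Lie-Rinehart algebra over (K, C) with anchor ι, and let ω be a closed nondegenerate 2-form on L. Define, for f ∈ C, the Hamiltonian element X_f ∈ L by ω(X_f, Y) = −(ι(Y))f for all Y ∈ L, and the bracket {f, g} = ω(X_f, X_g). Then the bracket satisfies the Jacobi identity: {f,{g,h}} + {g,{h,f}} + {h,{f,g}} = 0 for all f, g, h ∈ C. -/
/-- On a Lie-Rinehart algebra `L` with a closed nondegenerate
2-form `ω`, the bracket `{f,g} = ω(X_f, X_g)` (with `ω(X_f, Y) = −ι(Y)f`)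
satisfies the Jacobi identity. -/
theorem poisson_bracket_jacobi
    {C L : Type*} [CommRing C] [LieRing L] [Module C L]
    (ι : L → C → C)
    (hanchor : ∀ (X Y : L) (f : C), ι ⁅X, Y⁆ f = ι X (ι Y f) - ι Y (ι X f))
    (ω : L → L → C)
    (hskew : ∀ X Y : L, ω X Y = -ω Y X)
    (hnondeg : ∀ X : L, (∀ Y : L, ω X Y = 0) → X = 0)
    (hclosed : ∀ X Y Z : L,
      ι X (ω Y Z) - ι Y (ω X Z) + ι Z (ω X Y)
        - ω ⁅X, Y⁆ Z + ω ⁅X, Z⁆ Y - ω ⁅Y, Z⁆ X = 0)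
    (Xham : C → L)
    (hX : ∀ (f : C) (Y : L), ω (Xham f) Y = -(ι Y f))
    (bracket : C → C → C)
    (hbr : ∀ f g : C, bracket f g = ω (Xham f) (Xham g)) :
    ∀ f g h : C,
      bracket f (bracket g h) + bracket g (bracket h f)
        + bracket h (bracket f g) = 0 := by
  -- `ι` applied to a Hamiltonian element is expressed by `ω`.
  have key : ∀ a b : C, ι (Xham a) b = ω (Xham a) (Xham b) := by
    intro a b
    rw [hskew, hX b (Xham a)]
    ring
  -- abbreviation
  set s : C → C → C → C := fun a b c => ι (Xham a) (ω (Xham b) (Xham c)) with hs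
  -- `ω` of a Lie bracket against a Hamiltonian element.
  have hbrk : ∀ (X Y : L) (u : C),
      ω ⁅X, Y⁆ (Xham u) = ι X (ι Y u) - ι Y (ι X u) := by
    intro X Y u
    rw [hskew, hX u ⁅X, Y⁆, hanchor]
    ring
  -- the fundamental relation coming from closedness at Hamiltonian triples
  have R : ∀ a b c : C, s a c b - s b c a + s c b a = 0 := by
    intro a b c
    have hc := hclosed (Xham a) (Xham b) (Xham c)
    rw [hbrk (Xham a) (Xham b) c, hbrk (Xham a) (Xham c) b,
        hbrk (Xham b) (Xham c) a] at hc
    rw [key b c, key a c, key a b, key c a, key b a, key c b] at hc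
    simp only [hs]
    linear_combination hc
  -- antisymmetry in the last two arguments
  have A : ∀ a b c : C, s a b c + s a c b = 0 := by
    intro a b c
    linear_combination R a c b + R a b c
  intro f g h
  have e1 : bracket f (bracket g h) = s f g h := by
    rw [hbr g h, hbr f (ω (Xham g) (Xham h)), ← key]
  have e2 : bracket g (bracket h f) = s g h f := by
    rw [hbr h f, hbr g (ω (Xham h) (Xham f)), ← key]
  have e3 : bracket h (bracket f g) = s h f g := by
    rw [hbr f g, hbr h (ω (Xham f) (Xham g)), ← key]
  rw [e1, e2, e3]
  -- from R: s f g h + s g h f = s h g f ; from A: s h g f = - s h f g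
  have hR := R f g h   -- s f h g - s g h f + s h g f = 0  (need right instance)
  -- Find correct instances by linear_combination search:
  linear_combination R f h g + A h g f
end

section
/- Let L be a Lie-Rinehart algebra with a nondegenerate 2-form ω and a torsion-free connection ∇⁰ on L. Define ∇_X Y = ∇⁰_X Y + Θ(X,Y) + A(X,Y), where Θ and A are determined by ω(Θ(X,Y), Z) = (1/2)(∇⁰_X ω)(Y,Z) and ω(A(X,Y), Z) = (1/6)[(∇⁰_Y ω)(X,Z) + (∇⁰_Z ω)(X,Y)]. If dω = 0, then ∇ is a connection on L that preserves ω (∇_X ω = 0 for all X) and has zero torsion. -/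
/-!
Write `T = ∇⁰ω`. Since `∇⁰` is a connection, `T` is `C`-trilinear and skew in its last two
arguments, so by nondegeneracy `Θ` and `A` are well-defined tensors and `∇` is again a connection.
Replacing `∇⁰` by `∇⁰ + B` changes `∇_X ω` by `-ω(B_X ·, ·) - ω(·, B_X ·)`: for `B = Θ` each
term is `-½ T_X` by skewness of `T`, cancelling `T_X`, while the two terms of `A` cancel each
other by skewness of `ω`.
For torsion-freeness, `dω = 0` and `[X,Y] = ∇⁰_X Y - ∇⁰_Y X` give the cyclic identity
`T_X(Y,Z) - T_Y(X,Z) + T_Z(X,Y) = 0`, which turns `ω(Θ(X,Y) + A(X,Y), Z)` into an expression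
symmetric in `X` and `Y`, because `½ = 3 · ⅙`.
-/

namespace LieRinehart

variable {C L : Type*} [CommRing C]

section Form

variable [AddCommGroup L] {ω : L → L → C}

theorem form_sub_left (hadd : ∀ X Y Z : L, ω (X + Y) Z = ω X Z + ω Y Z) (U V Z : L) :
    ω (U - V) Z = ω U Z - ω V Z :=
  map_sub (AddMonoidHom.mk' (ω · Z) fun X Y => hadd X Y Z) U V

theorem eq_of_forall_form_eq (hadd : ∀ X Y Z : L, ω (X + Y) Z = ω X Z + ω Y Z)
    (hnondeg : ∀ X : L, (∀ Y : L, ω X Y = 0) → X = 0) {U V : L}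
    (h : ∀ Z : L, ω U Z = ω V Z) : U = V :=
  sub_eq_zero.mp <| hnondeg _ fun Z => by rw [form_sub_left hadd, h, sub_self]

theorem map_smul_of_form_eq [Module C L] (hadd : ∀ X Y Z : L, ω (X + Y) Z = ω X Z + ω Y Z)
    (hsmul : ∀ (f : C) (X Y : L), ω (f • X) Y = f * ω X Y)
    (hnondeg : ∀ X : L, (∀ Y : L, ω X Y = 0) → X = 0) {F : L → L} {S : L → L → C}
    (hF : ∀ X Z : L, ω (F X) Z = S X Z) (hS : ∀ (f : C) (X Z : L), S (f • X) Z = f * S X Z)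
    (f : C) (X : L) : F (f • X) = f • F X :=
  eq_of_forall_form_eq hadd hnondeg fun Z => by rw [hF, hS, hsmul, hF]

end Form

/-- `covDerivForm ι ω ∇ X Y Z` is `(∇_X ω)(Y, Z)`. -/
def covDerivForm (ι : L → C → C) (ω : L → L → C) (nabla : L → L → L) (X Y Z : L) : C :=
  ι X (ω Y Z) - ω (nabla X Y) Z - ω Y (nabla X Z)

section CovDerivForm

variable {ι : L → C → C} {ω : L → L → C} {nabla : L → L → L}

theorem covDerivForm_swap (hιadd : ∀ (X : L) (f g : C), ι X (f + g) = ι X f + ι X g)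
    (hskew : ∀ X Y : L, ω X Y = -ω Y X) (X Y Z : L) :
    covDerivForm ι ω nabla X Y Z = -covDerivForm ι ω nabla X Z Y := by
  have hιneg : ι X (-ω Z Y) = -ι X (ω Z Y) := map_neg (AddMonoidHom.mk' (ι X) (hιadd X)) _
  rw [covDerivForm, covDerivForm, hskew Y Z, hιneg]
  linear_combination -hskew (nabla X Y) Z - hskew Y (nabla X Z)

section Module

variable [AddCommGroup L] [Module C L]

theorem covDerivForm_smul_left (hιsmul : ∀ (f : C) (X : L) (g : C), ι (f • X) g = f * ι X g)
    (hωsmul1 : ∀ (f : C) (X Y : L), ω (f • X) Y = f * ω X Y)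
    (hωsmul2 : ∀ (f : C) (X Y : L), ω X (f • Y) = f * ω X Y)
    (hsmul : ∀ (f : C) (X Y : L), nabla (f • X) Y = f • nabla X Y) (f : C) (X Y Z : L) :
    covDerivForm ι ω nabla (f • X) Y Z = f * covDerivForm ι ω nabla X Y Z := by
  simp only [covDerivForm, hιsmul, hsmul, hωsmul1, hωsmul2]
  ring

theorem covDerivForm_smul_mid (hder : ∀ (X : L) (f g : C), ι X (f * g) = f * ι X g + ι X f * g)
    (hωadd1 : ∀ X Y Z : L, ω (X + Y) Z = ω X Z + ω Y Z)
    (hωsmul1 : ∀ (f : C) (X Y : L), ω (f • X) Y = f * ω X Y)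
    (hleib : ∀ (X : L) (f : C) (Y : L), nabla X (f • Y) = f • nabla X Y + ι X f • Y)
    (f : C) (X Y Z : L) :
    covDerivForm ι ω nabla X (f • Y) Z = f * covDerivForm ι ω nabla X Y Z := by
  simp only [covDerivForm, hωsmul1, hder, hleib, hωadd1]
  ring

theorem covDerivForm_smul_right (hder : ∀ (X : L) (f g : C), ι X (f * g) = f * ι X g + ι X f * g)
    (hιadd : ∀ (X : L) (f g : C), ι X (f + g) = ι X f + ι X g)
    (hskew : ∀ X Y : L, ω X Y = -ω Y X)
    (hωadd1 : ∀ X Y Z : L, ω (X + Y) Z = ω X Z + ω Y Z)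
    (hωsmul1 : ∀ (f : C) (X Y : L), ω (f • X) Y = f * ω X Y)
    (hleib : ∀ (X : L) (f : C) (Y : L), nabla X (f • Y) = f • nabla X Y + ι X f • Y)
    (f : C) (X Y Z : L) :
    covDerivForm ι ω nabla X Y (f • Z) = f * covDerivForm ι ω nabla X Y Z := by
  rw [covDerivForm_swap hιadd hskew, covDerivForm_smul_mid hder hωadd1 hωsmul1 hleib,
    covDerivForm_swap hιadd hskew X Y Z]
  ring

end Module

theorem covDerivForm_cyclic [LieRing L] (hskew : ∀ X Y : L, ω X Y = -ω Y X)
    (hωadd1 : ∀ X Y Z : L, ω (X + Y) Z = ω X Z + ω Y Z)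
    (htor : ∀ X Y : L, nabla X Y - nabla Y X = ⁅X, Y⁆)
    (hclosed : ∀ X Y Z : L, ι X (ω Y Z) - ι Y (ω X Z) + ι Z (ω X Y)
      - ω ⁅X, Y⁆ Z + ω ⁅X, Z⁆ Y - ω ⁅Y, Z⁆ X = 0) (X Y Z : L) :
    covDerivForm ι ω nabla X Y Z - covDerivForm ι ω nabla Y X Z
      + covDerivForm ι ω nabla Z X Y = 0 := by
  have h := hclosed X Y Z
  simp only [← htor, form_sub_left hωadd1] at h
  rw [covDerivForm, covDerivForm, covDerivForm]
  linear_combination h - hskew Y (nabla X Z) + hskew X (nabla Y Z) - hskew X (nabla Z Y)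

theorem covDerivForm_add [Add L] (hωadd1 : ∀ X Y Z : L, ω (X + Y) Z = ω X Z + ω Y Z)
    (hωadd2 : ∀ X Y Z : L, ω X (Y + Z) = ω X Y + ω X Z) (B : L → L → L) (X Y Z : L) :
    covDerivForm ι ω (fun X Y => nabla X Y + B X Y) X Y Z
      = covDerivForm ι ω nabla X Y Z - ω (B X Y) Z - ω Y (B X Z) := by
  simp only [covDerivForm, hωadd1, hωadd2]
  ring

end CovDerivForm

section Construction

variable {ι : L → C → C} {ω : L → L → C} {nabla0 Θ A : L → L → L} {a b : C}

theorem covDerivForm_add_correction_eq_zero [AddCommGroup L]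
    (hιadd : ∀ (X : L) (f g : C), ι X (f + g) = ι X f + ι X g)
    (hskew : ∀ X Y : L, ω X Y = -ω Y X)
    (hωadd1 : ∀ X Y Z : L, ω (X + Y) Z = ω X Z + ω Y Z)
    (hωadd2 : ∀ X Y Z : L, ω X (Y + Z) = ω X Y + ω X Z)
    (hΘ : ∀ X Y Z : L, ω (Θ X Y) Z = a * covDerivForm ι ω nabla0 X Y Z)
    (hA : ∀ X Y Z : L, ω (A X Y) Z
      = b * (covDerivForm ι ω nabla0 Y X Z + covDerivForm ι ω nabla0 Z X Y))
    (ha : 2 * a = 1) (X Y Z : L) :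
    covDerivForm ι ω (fun X Y => nabla0 X Y + Θ X Y + A X Y) X Y Z = 0 := by
  simp only [add_assoc]
  rw [covDerivForm_add hωadd1 hωadd2, hωadd1, hωadd2, hskew Y, hskew Y, hΘ, hΘ, hA, hA,
    covDerivForm_swap hιadd hskew X Z Y]
  linear_combination -covDerivForm ι ω nabla0 X Y Z * ha

theorem correction_symm [LieRing L]
    (hιadd : ∀ (X : L) (f g : C), ι X (f + g) = ι X f + ι X g)
    (hskew : ∀ X Y : L, ω X Y = -ω Y X)
    (hωadd1 : ∀ X Y Z : L, ω (X + Y) Z = ω X Z + ω Y Z)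
    (hnondeg : ∀ X : L, (∀ Y : L, ω X Y = 0) → X = 0)
    (htor : ∀ X Y : L, nabla0 X Y - nabla0 Y X = ⁅X, Y⁆)
    (hclosed : ∀ X Y Z : L, ι X (ω Y Z) - ι Y (ω X Z) + ι Z (ω X Y)
      - ω ⁅X, Y⁆ Z + ω ⁅X, Z⁆ Y - ω ⁅Y, Z⁆ X = 0)
    (hΘ : ∀ X Y Z : L, ω (Θ X Y) Z = a * covDerivForm ι ω nabla0 X Y Z)
    (hA : ∀ X Y Z : L, ω (A X Y) Z
      = b * (covDerivForm ι ω nabla0 Y X Z + covDerivForm ι ω nabla0 Z X Y))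
    (hab : 3 * b = a) (X Y : L) :
    Θ X Y + A X Y = Θ Y X + A Y X := by
  refine eq_of_forall_form_eq hωadd1 hnondeg fun Z => ?_
  rw [hωadd1, hωadd1, hΘ, hΘ, hA, hA, covDerivForm_swap hιadd hskew Z Y X]
  linear_combination 2 * b * covDerivForm_cyclic hskew hωadd1 htor hclosed X Y Z
    - (covDerivForm ι ω nabla0 X Y Z - covDerivForm ι ω nabla0 Y X Z) * hab

end Construction

end LieRinehart

theorem invOf_two_eq_three_mul_invOf_six {K : Type*} [CommRing K] [Invertible (2 : K)]
    [Invertible (6 : K)] : (⅟2 : K) = 3 * ⅟6 :=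
  invOf_eq_right_inv (by linear_combination mul_invOf_self (6 : K))

open LieRinehart in
theorem symplectic_connection_construction_general
    {K C L : Type*} [CommRing K] [Invertible (2 : K)] [Invertible (6 : K)]
    [CommRing C] [Algebra K C]
    [LieRing L] [Module C L]
    (ι : L → C → C)
    (hιsmul : ∀ (f : C) (X : L) (g : C), ι (f • X) g = f * ι X g)
    (hιadd : ∀ (X : L) (f g : C), ι X (f + g) = ι X f + ι X g)
    (hder : ∀ (X : L) (f g : C), ι X (f * g) = f * ι X g + ι X f * g)
    (ω : L → L → C)
    (hskew : ∀ X Y : L, ω X Y = -ω Y X)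
    (hωadd1 : ∀ X Y Z : L, ω (X + Y) Z = ω X Z + ω Y Z)
    (hωadd2 : ∀ X Y Z : L, ω X (Y + Z) = ω X Y + ω X Z)
    (hωsmul1 : ∀ (f : C) (X Y : L), ω (f • X) Y = f * ω X Y)
    (hωsmul2 : ∀ (f : C) (X Y : L), ω X (f • Y) = f * ω X Y)
    (hnondeg : ∀ X : L, (∀ Y : L, ω X Y = 0) → X = 0)
    (nabla0 : L → L → L)
    (h0C1 : ∀ (f : C) (X Y : L), nabla0 (f • X) Y = f • nabla0 X Y)
    (h0Leib : ∀ (X : L) (f : C) (Y : L),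
      nabla0 X (f • Y) = f • nabla0 X Y + ι X f • Y)
    (h0tor : ∀ X Y : L, nabla0 X Y - nabla0 Y X = ⁅X, Y⁆)
    -- the covariant derivative of ω with respect to ∇⁰
    (nabla0ω : L → L → L → C)
    (hnabla0ω : ∀ X Y Z : L,
      nabla0ω X Y Z = ι X (ω Y Z) - ω (nabla0 X Y) Z - ω Y (nabla0 X Z))
    -- assumption dω = 0
    (hclosed : ∀ X Y Z : L,
      ι X (ω Y Z) - ι Y (ω X Z) + ι Z (ω X Y)
        - ω ⁅X, Y⁆ Z + ω ⁅X, Z⁆ Y - ω ⁅Y, Z⁆ X = 0)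
    (Θ A : L → L → L)
    (hΘ : ∀ X Y Z : L, ω (Θ X Y) Z = (⅟2 : K) • nabla0ω X Y Z)
    (hA : ∀ X Y Z : L,
      ω (A X Y) Z = (⅟6 : K) • (nabla0ω Y X Z + nabla0ω Z X Y))
    (nabla : L → L → L)
    (hnabla : ∀ X Y : L, nabla X Y = nabla0 X Y + Θ X Y + A X Y) :
    -- ∇ is a connection on L:
    (∀ (f : C) (X Y : L), nabla (f • X) Y = f • nabla X Y) ∧
    (∀ (X : L) (f : C) (Y : L),
      nabla X (f • Y) = f • nabla X Y + ι X f • Y) ∧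
    -- ∇ preserves ω:
    (∀ X Y Z : L, ι X (ω Y Z) - ω (nabla X Y) Z - ω Y (nabla X Z) = 0) ∧
    -- ∇ has zero torsion:
    (∀ X Y : L, nabla X Y - nabla Y X - ⁅X, Y⁆ = 0) := by
  obtain rfl : nabla0ω = covDerivForm ι ω nabla0 := funext₃ hnabla0ω
  obtain rfl : nabla = fun X Y => nabla0 X Y + Θ X Y + A X Y := funext₂ hnabla
  simp only [Algebra.smul_def] at hΘ hA
  have ha : 2 * algebraMap K C ⅟2 = 1 := by
    rw [← map_ofNat (algebraMap K C) 2, ← map_mul, mul_invOf_self, map_one]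
  have hab : 3 * algebraMap K C ⅟6 = algebraMap K C ⅟2 := by
    rw [invOf_two_eq_three_mul_invOf_six, map_mul, map_ofNat]
  have hT1 := covDerivForm_smul_left hιsmul hωsmul1 hωsmul2 h0C1
  have hT2 := covDerivForm_smul_mid hder hωadd1 hωsmul1 h0Leib
  have hT3 := covDerivForm_smul_right hder hιadd hskew hωadd1 hωsmul1 h0Leib
  have tensorial {F : L → L} {S : L → L → C} :=
    map_smul_of_form_eq (F := F) (S := S) hωadd1 hωsmul1 hnondeg
  refine ⟨fun f X Y => ?_, fun X f Y => ?_,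
    covDerivForm_add_correction_eq_zero hιadd hskew hωadd1 hωadd2 hΘ hA ha, fun X Y => ?_⟩
  · beta_reduce
    rw [h0C1, tensorial (hΘ · Y) (by intros; rw [hT1]; ring),
      tensorial (hA · Y) (by intros; rw [hT2, hT2]; ring), smul_add, smul_add]
  · beta_reduce
    rw [h0Leib, tensorial (hΘ X) (by intros; rw [hT2]; ring),
      tensorial (hA X) (by intros; rw [hT1, hT3]; ring), smul_add, smul_add]
    abel
  · beta_reduce
    rw [← h0tor, add_assoc, add_assoc, correction_symm hιadd hskew hωadd1 hnondeg h0tor hclosed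
      hΘ hA hab X Y]
    abel

/-- Given a torsion-free connection `∇⁰` on a Lie-Rinehart
algebra `L` with nondegenerate 2-form `ω`, define
`∇_X Y = ∇⁰_X Y + Θ(X,Y) + A(X,Y)` where
`ω(Θ(X,Y),Z) = (1/2)(∇⁰_X ω)(Y,Z)` and
`ω(A(X,Y),Z) = (1/6)[(∇⁰_Y ω)(X,Z) + (∇⁰_Z ω)(X,Y)]`.
If `dω = 0`, then `∇` is a connection on `L` preserving `ω` with zero torsion. -/
theorem symplectic_connection_construction
    {K C L : Type*} [CommRing K] [Invertible (2 : K)] [Invertible (6 : K)]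
    [CommRing C] [Algebra K C]
    [LieRing L] [Module C L] [Module K L]
    [IsScalarTower K C L] [SMulCommClass K C L]
    (ι : L → C → C)
    (hιsmul : ∀ (f : C) (X : L) (g : C), ι (f • X) g = f * ι X g)
    (hιadd : ∀ (X : L) (f g : C), ι X (f + g) = ι X f + ι X g)
    (hder : ∀ (X : L) (f g : C), ι X (f * g) = f * ι X g + ι X f * g)
    (hcompat : ∀ (X Y : L) (f : C), ⁅X, f • Y⁆ = f • ⁅X, Y⁆ + ι X f • Y)
    (ω : L → L → C)
    (hskew : ∀ X Y : L, ω X Y = -ω Y X)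
    (hωadd1 : ∀ X Y Z : L, ω (X + Y) Z = ω X Z + ω Y Z)
    (hωadd2 : ∀ X Y Z : L, ω X (Y + Z) = ω X Y + ω X Z)
    (hωsmul1 : ∀ (f : C) (X Y : L), ω (f • X) Y = f * ω X Y)
    (hωsmul2 : ∀ (f : C) (X Y : L), ω X (f • Y) = f * ω X Y)
    (hnondeg : ∀ X : L, (∀ Y : L, ω X Y = 0) → X = 0)
    (nabla0 : L → L → L)
    (h0add1 : ∀ X Y Z : L, nabla0 (X + Y) Z = nabla0 X Z + nabla0 Y Z)
    (h0add2 : ∀ X Y Z : L, nabla0 X (Y + Z) = nabla0 X Y + nabla0 X Z)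
    (h0C1 : ∀ (f : C) (X Y : L), nabla0 (f • X) Y = f • nabla0 X Y)
    (h0Leib : ∀ (X : L) (f : C) (Y : L),
      nabla0 X (f • Y) = f • nabla0 X Y + ι X f • Y)
    (h0tor : ∀ X Y : L, nabla0 X Y - nabla0 Y X = ⁅X, Y⁆)
    -- the covariant derivative of ω with respect to ∇⁰
    (nabla0ω : L → L → L → C)
    (hnabla0ω : ∀ X Y Z : L,
      nabla0ω X Y Z = ι X (ω Y Z) - ω (nabla0 X Y) Z - ω Y (nabla0 X Z))
    -- assumption dω = 0
    (hclosed : ∀ X Y Z : L,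
      ι X (ω Y Z) - ι Y (ω X Z) + ι Z (ω X Y)
        - ω ⁅X, Y⁆ Z + ω ⁅X, Z⁆ Y - ω ⁅Y, Z⁆ X = 0)
    (Θ A : L → L → L)
    (hΘ : ∀ X Y Z : L, ω (Θ X Y) Z = (⅟2 : K) • nabla0ω X Y Z)
    (hA : ∀ X Y Z : L,
      ω (A X Y) Z = (⅟6 : K) • (nabla0ω Y X Z + nabla0ω Z X Y))
    (nabla : L → L → L)
    (hnabla : ∀ X Y : L, nabla X Y = nabla0 X Y + Θ X Y + A X Y) :
    -- ∇ is a connection on L: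
    (∀ (f : C) (X Y : L), nabla (f • X) Y = f • nabla X Y) ∧
    (∀ (X : L) (f : C) (Y : L),
      nabla X (f • Y) = f • nabla X Y + ι X f • Y) ∧
    -- ∇ preserves ω:
    (∀ X Y Z : L, ι X (ω Y Z) - ω (nabla X Y) Z - ω Y (nabla X Z) = 0) ∧
    -- ∇ has zero torsion:
    (∀ X Y : L, nabla X Y - nabla Y X - ⁅X, Y⁆ = 0) :=
  symplectic_connection_construction_general ι hιsmul hιadd hder ω hskew hωadd1 hωadd2 hωsmul1
    hωsmul2 hnondeg nabla0 h0C1 h0Leib h0tor nabla0ω hnabla0ω hclosed Θ A hΘ hA nabla hnabla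
end

section
/- Let (M,W) be a Poisson manifold and consider the cotangent Lie algebroid T*M with anchor ♯_W and bracket {α,β} = L_{♯_W α}β − L_{♯_W β}α − d(W(α,β)). Let D be a linear connection on M and define ∇_α β = D_{♯_W α} β. Then the torsion of ∇ satisfies ⟨T_∇(α,β), X⟩ = α(T_D(♯_W β, X)) − β(T_D(♯_W α, X)) − (D_X W)(α,β) for all 1-forms α, β and vector fields X, where T_D is the torsion of D. -/
/-- Let `(M,W)` be a Poisson manifold, `T*M` its cotangent
Lie algebroid with anchor `♯_W` and Koszul bracket
`{α,β} = L_{♯α}β − L_{♯β}α − d(W(α,β))`, and let `D` be a linear connection on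
`M` with `∇_α β = D_{♯α} β`.  Then
`⟨T_∇(α,β), X⟩ = α(T_D(♯β,X)) − β(T_D(♯α,X)) − (D_X W)(α,β)`.

We formalize the (Lie–Rinehart) algebraic content: `C` plays the role of
`C^∞(M)`, `V` of vector fields, `Om` of 1-forms, `pair` of the canonical
pairing `⟨·,·⟩ : Ω¹ × 𝔛 → C`, `ι X f` of `X f`, and the operators `d`, Lie
derivative, `D` on forms, `♯_W` are specified by their defining pairing
identities. -/
theorem cotangent_algebroid_torsion_formula
    {C V Om : Type*} [CommRing C] [LieRing V] [Module C V]
    [AddCommGroup Om] [Module C Om]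
    (pair : Om →ₗ[C] V →ₗ[C] C)
    (ι : V → C → C)
    (W : Om → Om → C)
    (hWskew : ∀ α β : Om, W α β = -W β α)
    (sharp : Om → V)
    (hsharp : ∀ α β : Om, pair β (sharp α) = W α β)
    (dC : C → Om)
    (hd : ∀ (f : C) (X : V), pair (dC f) X = ι X f)
    (Lder : V → Om → Om)
    (hL : ∀ (X : V) (α : Om) (Y : V),
      pair (Lder X α) Y = ι X (pair α Y) - pair α ⁅X, Y⁆)
    (D : V → V → V)
    (Dform : V → Om → Om)
    (hDform : ∀ (X : V) (α : Om) (Y : V),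
      pair (Dform X α) Y = ι X (pair α Y) - pair α (D X Y))
    (TD : V → V → V)
    (hTD : ∀ X Y : V, TD X Y = D X Y - D Y X - ⁅X, Y⁆)
    (DW : V → Om → Om → C)
    (hDW : ∀ (X : V) (α β : Om),
      DW X α β = ι X (W α β) - W (Dform X α) β - W α (Dform X β))
    (kosz : Om → Om → Om)
    (hkosz : ∀ α β : Om,
      kosz α β = Lder (sharp α) β - Lder (sharp β) α - dC (W α β))
    (nab : Om → Om → Om)
    (hnab : ∀ α β : Om, nab α β = Dform (sharp α) β)
    (Tnab : Om → Om → Om)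
    (hTnab : ∀ α β : Om, Tnab α β = nab α β - nab β α - kosz α β) :
    ∀ (α β : Om) (X : V),
      pair (Tnab α β) X
        = pair α (TD (sharp β) X) - pair β (TD (sharp α) X) - DW X α β := by
  intro α β X
  -- Key: ι X is "odd" on values of the pairing
  have key : ι X (W β α) = -ι X (W α β) := by
    have h1 := hL X β (sharp α)
    have h2 := hL X β (-(sharp α))
    have harg : W β α = pair β (-(sharp α)) := by
      rw [map_neg, hsharp, hWskew β α]
    simp only [map_neg, lie_neg] at h2
    rw [harg, ← hsharp α β]
    simp only [map_neg]
    linear_combination -h2 - h1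
  have h1 := hDform (sharp α) β X
  have h2 := hDform (sharp β) α X
  have h3 := hL (sharp α) β X
  have h4 := hL (sharp β) α X
  have h5 := hd (W α β) X
  have h6 := hDform X β (sharp α)
  have h7 := hDform X α (sharp β)
  rw [hsharp α β] at h6
  rw [hsharp β α, key] at h7
  have h9 := hWskew (Dform X α) β
  have h10 := hsharp β (Dform X α)
  have h11 := hsharp α (Dform X β)
  rw [hTnab, hnab, hnab, hkosz, hTD, hTD, hDW]
  simp only [map_sub, LinearMap.sub_apply]
  linear_combination h1 - h2 - h3 + h4 + h5 - h9 - h10 + h7 + h11 - h6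
end
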